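/- Let $g_f, g_d, P_{BS}, P_{user}, N_0 > 0$ and $\beta \geq 0$. Define $a_1 = g_d P_{BS}^2 P_{user}$, $b_1 = N_0 g_f P_{user}(P_{BS} - P_{user})$, $c_1 = N_0^2 g_f P_{user} + N_0 g_f^2 P_{BS} P_{user}$. Suppose $g_f = g_d$. Then the full-duplex condition $\log\big(1 + \frac{g_f P_{BS}}{N_0 + \beta P_{user}}\big) + \log\big(1 + \frac{g_f P_{user}}{N_0 + \beta P_{BS}}\big) > \log\big(1 + \frac{g_d P_{BS}}{N_0}\big)$ holds if and only if $a_1 \beta^2 + b_1 \beta - c_1 < 0$. -/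

import Mathlib

/-! Both sides are logarithms of positive numbers, so the rate condition is the inequality of
their arguments. Clearing the positive denominators `N0`, `N0 + β Puser`, `N0 + β PBS`, the
difference of the two sides is, when `gf = gd`, exactly minus the quadratic
`a₁ β² + b₁ β - c₁`. -/

open Real

theorem log_lt_log_add_log_iff {x y z : ℝ} (hx : 0 < x) (hy : 0 < y) (hz : 0 < z) :
    log z < log x + log y ↔ z < x * y := by
  rw [← log_mul hx.ne' hy.ne', log_lt_log_iff hz (mul_pos hx hy)]

theorem one_add_div_lt_mul_one_add_div_iff {a b c n u v : ℝ} (hn : 0 < n) (hu : 0 < u)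
    (hv : 0 < v) :
    1 + c / n < (1 + a / u) * (1 + b / v) ↔ (n + c) * (u * v) < (u + a) * (v + b) * n := by
  rw [one_add_div hn.ne', one_add_div hu.ne', one_add_div hv.ne', div_mul_div_comm,
    div_lt_div_iff₀ hn (mul_pos hu hv)]

theorem fullDuplex_cross_difference (g PBS Puser N0 β : ℝ) :
    (N0 + β * Puser + g * PBS) * (N0 + β * PBS + g * Puser) * N0 -
        (N0 + g * PBS) * ((N0 + β * Puser) * (N0 + β * PBS)) =
      -((g * PBS ^ 2 * Puser) * β ^ 2 + (N0 * g * Puser * (PBS - Puser)) * β -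
        (N0 ^ 2 * g * Puser + N0 * g ^ 2 * PBS * Puser)) := by
  ring

theorem stmt_8_general (gf gd PBS Puser N0 β : ℝ)
    (hgf : 0 < gf) (hPBS : 0 < PBS) (hPuser : 0 < Puser)
    (hN0 : 0 < N0) (hβ : 0 ≤ β) (hfd : gf = gd) :
    (Real.log (1 + gf * PBS / (N0 + β * Puser)) +
       Real.log (1 + gf * Puser / (N0 + β * PBS)) >
     Real.log (1 + gd * PBS / N0)) ↔
    (gd * PBS ^ 2 * Puser) * β ^ 2 +
      (N0 * gf * Puser * (PBS - Puser)) * β -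
      (N0 ^ 2 * gf * Puser + N0 * gf ^ 2 * PBS * Puser) < 0 := by
  subst hfd
  have hu : 0 < N0 + β * Puser := by positivity
  have hv : 0 < N0 + β * PBS := by positivity
  rw [gt_iff_lt, log_lt_log_add_log_iff (by positivity) (by positivity) (by positivity),
    one_add_div_lt_mul_one_add_div_iff hN0 hu hv, ← sub_pos,
    fullDuplex_cross_difference, neg_pos]

theorem stmt_8 (gf gd PBS Puser N0 β : ℝ)
    (hgf : 0 < gf) (hgd : 0 < gd) (hPBS : 0 < PBS) (hPuser : 0 < Puser)
    (hN0 : 0 < N0) (hβ : 0 ≤ β) (hfd : gf = gd) :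
    (Real.log (1 + gf * PBS / (N0 + β * Puser)) +
       Real.log (1 + gf * Puser / (N0 + β * PBS)) >
     Real.log (1 + gd * PBS / N0)) ↔
    (gd * PBS ^ 2 * Puser) * β ^ 2 +
      (N0 * gf * Puser * (PBS - Puser)) * β -
      (N0 ^ 2 * gf * Puser + N0 * gf ^ 2 * PBS * Puser) < 0 :=
  stmt_8_general gf gd PBS Puser N0 β hgf hPBS hPuser hN0 hβ hfd
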